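/- The total number of vertex-block incidences over all vertex-resilient blocks of a directed graph on n ≥ 1 vertices is at most 2n − 2, i.e., ∑_B |B| ≤ 2n − 2 where the sum is over all vertex-resilient blocks B. -/

import Mathlib

variable {V : Type*}

/-- Mutual reachability (strong connectivity of a pair) in the digraph `E`. -/
def SConn (E : V → V → Prop) (u v : V) : Prop :=
  Relation.ReflTransGen E u v ∧ Relation.ReflTransGen E v u

/-- The digraph obtained from `E` by deleting vertex `w` (and incident edges). -/
def delV (E : V → V → Prop) (w : V) : V → V → Prop :=
  fun a b => E a b ∧ a ≠ w ∧ b ≠ w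

/-- The digraph obtained from `E` by deleting the single edge `(a,b)`. -/
def delE (E : V → V → Prop) (a b : V) : V → V → Prop :=
  fun x y => E x y ∧ ¬(x = a ∧ y = b)

/-- `u` and `v` are vertex-resilient: they are distinct and remain strongly
connected after deletion of any single other vertex. -/
def VRes (E : V → V → Prop) (u v : V) : Prop :=
  u ≠ v ∧ ∀ w, w ≠ u → w ≠ v → SConn (delV E w) u v

/-- A vertex-resilient block: a maximal set of size ≥ 2 of pairwise
vertex-resilient vertices. -/
def IsVRBlock (E : V → V → Prop) (B : Set V) : Prop :=
  B.Pairwise (VRes E) ∧ (∃ a ∈ B, ∃ b ∈ B, a ≠ b) ∧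
    ∀ B' : Set V, B ⊆ B' → B'.Pairwise (VRes E) → B' = B

/-- `l` is (the vertex list of) a directed path from `u` to `v` in `E`. -/
def IsPathList (E : V → V → Prop) (u v : V) (l : List V) : Prop :=
  l.Chain' E ∧ l.head? = some u ∧ l.getLast? = some v

/-- The internal vertices of a path given as a vertex list. -/
def internalsL (l : List V) : List V := (l.drop 1).dropLast

/-- The edges of a path given as a vertex list. -/
def edgesOfL (l : List V) : List (V × V) := l.zip l.tail

/-- There exist two internally vertex-disjoint (simple, distinct) paths from `u` to `v`. -/
def TwoVPaths (E : V → V → Prop) (u v : V) : Prop :=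
  ∃ l₁ l₂ : List V, IsPathList E u v l₁ ∧ IsPathList E u v l₂ ∧
    l₁.Nodup ∧ l₂.Nodup ∧ l₁ ≠ l₂ ∧ ∀ x ∈ internalsL l₁, x ∉ internalsL l₂

/-- `u` and `v` are 2-vertex-connected. -/
def TwoVConn (E : V → V → Prop) (u v : V) : Prop :=
  u ≠ v ∧ TwoVPaths E u v ∧ TwoVPaths E v u

/-- There exist two edge-disjoint paths from `u` to `v`. -/
def TwoEPaths (E : V → V → Prop) (u v : V) : Prop :=
  ∃ l₁ l₂ : List V, IsPathList E u v l₁ ∧ IsPathList E u v l₂ ∧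
    ∀ e ∈ edgesOfL l₁, e ∉ edgesOfL l₂

/-- `u` and `v` are 2-edge-connected. -/
def TwoEConn (E : V → V → Prop) (u v : V) : Prop :=
  u ≠ v ∧ TwoEPaths E u v ∧ TwoEPaths E v u

/-- A 2-vertex-connected block. -/
def Is2VBlock (E : V → V → Prop) (B : Set V) : Prop :=
  B.Pairwise (TwoVConn E) ∧ (∃ a ∈ B, ∃ b ∈ B, a ≠ b) ∧
    ∀ B' : Set V, B ⊆ B' → B'.Pairwise (TwoVConn E) → B' = B

/-- A 2-edge-connected block. -/
def Is2EBlock (E : V → V → Prop) (B : Set V) : Prop :=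
  B.Pairwise (TwoEConn E) ∧ (∃ a ∈ B, ∃ b ∈ B, a ≠ b) ∧
    ∀ B' : Set V, B ⊆ B' → B'.Pairwise (TwoEConn E) → B' = B

/-- The digraph `E` is strongly connected. -/
def StronglyConn (E : V → V → Prop) : Prop :=
  ∀ u v, Relation.ReflTransGen E u v

/-- `(a,b)` is a strong bridge of the strongly connected digraph `E`. -/
def IsStrongBridge (E : V → V → Prop) (a b : V) : Prop :=
  E a b ∧ ¬ StronglyConn (delE E a b)

/-- `u` dominates `w` in the flow graph with start vertex `s`:
every path from `s` to `w` contains `u`. -/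
def DomOf (E : V → V → Prop) (s u w : V) : Prop :=
  ∀ l : List V, IsPathList E s w l → u ∈ l

/-- `d` is the immediate dominator of `w` in the flow graph with start `s`:
the proper dominator of `w` dominated by all proper dominators of `w`. -/
def IdomOf (E : V → V → Prop) (s d w : V) : Prop :=
  d ≠ w ∧ DomOf E s d w ∧ ∀ u, u ≠ w → DomOf E s u w → DomOf E s u d

/-- The block graph `F` of the digraph `E`: the bipartite undirected graph on the
vertices of `E` together with its vertex-resilient blocks, a vertex `u` being
adjacent to a block node `B` exactly when `u ∈ B`. -/
def blockGraph (E : V → V → Prop) :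
    SimpleGraph (V ⊕ {B : Set V // IsVRBlock E B}) where
  Adj a b := ∃ u B, u ∈ B.1 ∧
    ((a = Sum.inl u ∧ b = Sum.inr B) ∨ (a = Sum.inr B ∧ b = Sum.inl u))
  symm := ⟨by
    rintro a b ⟨u, B, hm, (⟨rfl, rfl⟩ | ⟨rfl, rfl⟩)⟩
    · exact ⟨u, B, hm, Or.inr ⟨rfl, rfl⟩⟩
    · exact ⟨u, B, hm, Or.inl ⟨rfl, rfl⟩⟩⟩
  loopless := ⟨by
    rintro a ⟨u, B, hm, (⟨rfl, h⟩ | ⟨rfl, h⟩)⟩ <;> simp at h⟩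

/-!
If `x` and `y` are both vertex-resilient to two distinct vertices `u` and `v`, then `x ↔vr y`:
deleting a vertex `w` spares `u` or `v`, and `x`, `y` stay strongly connected through it.
Consequently a vertex resilient to two vertices of a block lies in the block, two blocks share at
most one vertex, and a cycle of vertices in which consecutive ones are resilient closes up.
So the blocks form a hyperforest: some block meets the union of the others in at most one
vertex, and peeling such leaves off gives `∑_B (|B| - 1) ≤ n - 1`. Since `|B| ≥ 2`, `|B| ≤ 2 (|B| - 1)`, whence `∑_B |B| ≤ 2n - 2`.
-/

variable {E : V → V → Prop}

namespace SConn

theorem symm {a b : V} (h : SConn E a b) : SConn E b a := ⟨h.2, h.1⟩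

theorem trans {a b c : V} (hab : SConn E a b) (hbc : SConn E b c) : SConn E a c :=
  ⟨hab.1.trans hbc.1, hbc.2.trans hab.2⟩

end SConn

namespace VRes

theorem symm {a b : V} (h : VRes E a b) : VRes E b a :=
  ⟨h.1.symm, fun w hwb hwa => (h.2 w hwa hwb).symm⟩

theorem of_common_pair {u v x y : V} (huv : u ≠ v) (hxy : x ≠ y)
    (hxu : VRes E x u) (hxv : VRes E x v) (hyu : VRes E y u) (hyv : VRes E y v) :
    VRes E x y := by
  refine ⟨hxy, fun w hwx hwy => ?_⟩
  by_cases hwu : w = u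
  · have hwv : w ≠ v := hwu ▸ huv
    exact (hxv.2 w hwx hwv).trans (hyv.2 w hwy hwv).symm
  · exact (hxu.2 w hwx hwu).trans (hyu.2 w hwy hwu).symm

theorem sconn_delV_of_isChain {d b : V} :
    ∀ {a : V} {l : List V}, (a :: (l ++ [b])).IsChain (VRes E) → d ∉ a :: (l ++ [b]) →
      SConn (delV E d) a b
  | a, [], hc, hd => by
    simp only [List.nil_append, List.isChain_cons_cons, List.mem_cons, not_or] at hc hd
    exact hc.1.2 d hd.1 hd.2.1
  | a, x :: l, hc, hd => by
    simp only [List.cons_append, List.isChain_cons_cons] at hc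
    have hdx : d ∉ x :: (l ++ [b]) := fun h => hd (List.mem_cons_of_mem a h)
    exact (hc.1.2 d (List.ne_of_not_mem_cons hd) (List.ne_of_not_mem_cons hdx)).trans
      (sconn_delV_of_isChain (List.isChain_cons_cons.mpr hc |>.tail) hdx)

/-- Deleting `v` we go around the cycle the long way; deleting anything else we pass through `v`. -/
theorem of_isChain_cycle {v w z : V} {m : List V}
    (hc : (v :: w :: (m ++ [z])).IsChain (VRes E)) (hnd : (v :: w :: (m ++ [z])).Nodup)
    (hvz : VRes E v z) : VRes E w z := by
  have hvw : VRes E v w := (List.isChain_cons_cons.mp hc).1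
  have hwz : w ≠ z := fun h => (List.nodup_cons.mp (List.nodup_cons.mp hnd).2).1 (by simp [h])
  refine ⟨hwz, fun d hdw hdz => ?_⟩
  by_cases hdv : d = v
  · subst hdv
    exact sconn_delV_of_isChain hc.tail (List.nodup_cons.mp hnd).1
  · exact (hvw.2 d hdv hdw).symm.trans (hvz.2 d hdv hdz)

end VRes

namespace IsVRBlock

theorem two_le_ncard [Finite V] {B : Set V} (hB : IsVRBlock E B) : 2 ≤ B.ncard := by
  obtain ⟨a, ha, b, hb, hab⟩ := hB.2.1
  exact (Set.one_lt_ncard (Set.toFinite B)).mpr ⟨a, ha, b, hb, hab⟩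

theorem mem_of_vres {B : Set V} (hB : IsVRBlock E B) {u v x : V} (hu : u ∈ B) (hv : v ∈ B)
    (huv : u ≠ v) (hxu : VRes E x u) (hxv : VRes E x v) : x ∈ B := by
  have hxt : ∀ t ∈ B, x ≠ t → VRes E x t := by
    intro t ht hxt
    by_cases htu : t = u
    · exact htu ▸ hxu
    by_cases htv : t = v
    · exact htv ▸ hxv
    exact VRes.of_common_pair huv hxt hxu hxv (hB.1 ht hu htu) (hB.1 ht hv htv)
  have hpair : (insert x B).Pairwise (VRes E) :=
    Set.pairwise_insert.mpr ⟨hB.1, fun t ht hne => ⟨hxt t ht hne, (hxt t ht hne).symm⟩⟩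
  rw [← hB.2.2 _ (Set.subset_insert x B) hpair]
  exact Set.mem_insert x B

theorem eq_of_mem_of_mem {B C : Set V} (hB : IsVRBlock E B) (hC : IsVRBlock E C) {u v : V}
    (huB : u ∈ B) (huC : u ∈ C) (hvB : v ∈ B) (hvC : v ∈ C) (huv : u ≠ v) : B = C := by
  have hCB : C ⊆ B := by
    intro x hx
    by_cases hxu : x = u
    · exact hxu ▸ huB
    by_cases hxv : x = v
    · exact hxv ▸ hvB
    exact hB.mem_of_vres huB hvB huv (hC.1 hx huC hxu) (hC.1 hx hvC hxv)
  exact hC.2.2 B hCB hB.1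

/-- Coming back to `B` at `z` would close a cycle through `v`, so the successor of `v` would be
resilient to both `v` and `z` and hence lie in `B`. -/
theorem not_mem_of_isChain {B : Set V} (hB : IsVRBlock E B) {v z : V} {l : List V}
    (hv : v ∈ B) (hz : z ∈ B) (hleft : ∀ w ∈ l.head?, w ∉ B)
    (hc : (v :: l).IsChain (VRes E)) (hnd : (v :: l).Nodup) : z ∉ l := by
  intro hzl
  obtain ⟨w, rest, rfl⟩ := List.exists_cons_of_ne_nil (List.ne_nil_of_mem hzl)
  have hwB : w ∉ B := hleft w rfl
  have hzrest : z ∈ rest := (List.mem_cons.mp hzl).resolve_left (fun h => hwB (h ▸ hz))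
  obtain ⟨m, t, rfl⟩ := List.append_of_mem hzrest
  have hpre : v :: w :: (m ++ [z]) <+: v :: w :: (m ++ z :: t) := by simp
  have hzv : z ≠ v := fun h => (List.nodup_cons.mp hnd).1 (h ▸ hzl)
  have hwz : VRes E w z :=
    VRes.of_isChain_cycle (hc.prefix hpre) (hnd.sublist hpre.sublist)
      (hB.1 hv hz hzv.symm)
  exact hwB (hB.mem_of_vres hz hv hzv hwz (List.isChain_cons_cons.mp hc).1.symm)


/-- The walk so far is `v :: l`, newest vertex first, and `B` is the block it has just entered. -/
theorem exists_isChain_of_forall_one_lt_ncard {t : Finset (Set V)}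
    (ht : ∀ B ∈ t, IsVRBlock E B) (hne : t.Nonempty)
    (hshared : ∀ B ∈ t, 1 < (B ∩ ⋃₀ ↑(t.erase B)).ncard) (n : ℕ) :
    ∃ B ∈ t, ∃ v l, v ∈ B ∧ (∀ w ∈ l.head?, w ∉ B) ∧ (v :: l).IsChain (VRes E) ∧
      (v :: l).Nodup ∧ l.length = n := by
  induction n with
  | zero =>
    obtain ⟨B, hB⟩ := hne
    obtain ⟨a, ha, -⟩ := (ht B hB).2.1
    exact ⟨B, hB, a, [], ha, by simp, .singleton a, List.nodup_singleton a, rfl⟩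
  | succ n ih =>
    obtain ⟨B, hBt, v, l, hvB, hleft, hc, hnd, hlen⟩ := ih
    obtain ⟨z, ⟨hzB, C, hCt, hzC⟩, hzv⟩ := Set.exists_ne_of_one_lt_ncard (hshared B hBt) v
    obtain ⟨hCB, hCt⟩ := Finset.mem_erase.mp hCt
    have hB := ht B hBt
    have hvC : v ∉ C := fun hvC => hCB (hB.eq_of_mem_of_mem (ht C hCt) hzB hzC hvB hvC hzv).symm
    have hzl : z ∉ l := hB.not_mem_of_isChain hvB hzB hleft hc hnd
    refine ⟨C, hCt, z, v :: l, hzC, by simpa using hvC, ?_, ?_, by simp [hlen]⟩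
    · exact List.isChain_cons_cons.mpr ⟨hB.1 hzB hvB hzv, hc⟩
    · exact List.nodup_cons.mpr ⟨by simp [hzv, hzl], hnd⟩

theorem exists_leaf [Finite V] {t : Finset (Set V)} (ht : ∀ B ∈ t, IsVRBlock E B)
    (hne : t.Nonempty) : ∃ B ∈ t, (B ∩ ⋃₀ ↑(t.erase B)).ncard ≤ 1 := by
  have := Fintype.ofFinite V
  by_contra! hshared
  obtain ⟨-, -, v, l, -, -, -, hnd, hlen⟩ :=
    exists_isChain_of_forall_one_lt_ncard ht hne hshared (Fintype.card V)
  have := hnd.length_le_card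
  simp only [List.length_cons] at this
  omega

end IsVRBlock

/-- Peeling off a leaf `B` adds at least `|B| - 1` new points to the union. -/
theorem Finset.sum_ncard_sub_one_le_of_exists_leaf {α : Type*} [Finite α] (s : Finset (Set α))
    (hleaf : ∀ t ⊆ s, t.Nonempty → ∃ B ∈ t, (B ∩ ⋃₀ ↑(t.erase B)).ncard ≤ 1) :
    ∑ B ∈ s, (B.ncard - 1) ≤ (⋃₀ (s : Set (Set α))).ncard - 1 := by
  induction s using Finset.strongInduction with
  | H s ih =>
  obtain rfl | hne := s.eq_empty_or_nonempty
  · simp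
  obtain ⟨B, hB, hBleaf⟩ := hleaf s subset_rfl hne
  have hrest := ih (s.erase B) (Finset.erase_ssubset hB)
    (fun t hts => hleaf t (hts.trans (Finset.erase_subset B s)))
  set U := ⋃₀ (↑(s.erase B) : Set (Set α))
  have hunion : ⋃₀ (s : Set (Set α)) = B ∪ U := by
    rw [← Finset.insert_erase hB, Finset.coe_insert, Set.sUnion_insert]
  have hcard := Set.ncard_union_add_ncard_inter B U
  have hinterB := Set.ncard_inter_le_ncard_left B U
  have hinterU := Set.ncard_inter_le_ncard_right B U
  rw [← Finset.add_sum_erase s _ hB, hunion]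
  omega

theorem stmt5_general [Fintype V] (E : V → V → Prop) :
    ∑ᶠ B ∈ {B : Set V | IsVRBlock E B}, B.ncard ≤ 2 * Fintype.card V - 2 := by
  classical
  have hfin : {B : Set V | IsVRBlock E B}.Finite := Set.toFinite _
  rw [← hfin.coe_toFinset, finsum_mem_coe_finset]
  set s := hfin.toFinset
  have hs : ∀ B ∈ s, IsVRBlock E B := fun B hB => hfin.mem_toFinset.mp hB
  have hunion : (⋃₀ (s : Set (Set V))).ncard ≤ Fintype.card V :=
    (Set.ncard_le_card _).trans_eq Nat.card_eq_fintype_card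
  calc ∑ B ∈ s, B.ncard ≤ ∑ B ∈ s, 2 * (B.ncard - 1) :=
        Finset.sum_le_sum fun B hB => by have := (hs B hB).two_le_ncard; omega
    _ = 2 * ∑ B ∈ s, (B.ncard - 1) := (Finset.mul_sum s _ 2).symm
    _ ≤ 2 * ((⋃₀ (s : Set (Set V))).ncard - 1) := by
        gcongr
        exact s.sum_ncard_sub_one_le_of_exists_leaf fun t hts hne =>
          IsVRBlock.exists_leaf (fun B hB => hs B (hts hB)) hne
    _ ≤ 2 * Fintype.card V - 2 := by omega

/-- the total number of vertex-block incidences over all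
vertex-resilient blocks is at most `2n - 2`. -/
theorem stmt5 [Fintype V] (E : V → V → Prop) (hn : 1 ≤ Fintype.card V) :
    ∑ᶠ B ∈ {B : Set V | IsVRBlock E B}, B.ncard ≤ 2 * Fintype.card V - 2 :=
  stmt5_general E
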